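/- Let r = p·d with p, d ≥ 1. Let λ, μ ∈ P_{n,r} with λ ≠ μ, and suppose there are indices i, j ∈ {1,…,r} such that λ^{(l)} = μ^{(l)} for every l ∉ {i, j}, and such that if i ≠ j and λ^{(i)} = λ^{(j)} then μ^{(i)} ≠ μ^{(j)}. If 𝔨_λ divides 𝔨_μ, then 𝔨_μ = p. -/

import Mathlib

noncomputable section

/-- An `r`-multipartition of `n`, encoded as a function `la : ℕ → ℕ → ℕ`, where
`la k i` is the `(i+1)`-st part of the `(k+1)`-st component `λ^{(k+1)}`: each
component is weakly decreasing, the parts vanish from index `n` on, the components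
with index `≥ r` vanish, and the total size is `n`. -/
def IsMultipartition (n r : ℕ) (la : ℕ → ℕ → ℕ) : Prop :=
  (∀ k, Antitone (la k)) ∧ (∀ k i, n ≤ i → la k i = 0) ∧
    (∀ k, r ≤ k → ∀ i, la k i = 0) ∧
    (∑ k ∈ Finset.range r, ∑ i ∈ Finset.range n, la k i) = n

/-- The index map underlying the shift `λ ↦ λ[i]`: the component with (0-based) index
`t = c·p + j` (`0 ≤ j < p`) of `λ[i]` is the component of `λ` with index
`c·p + ((j + i) mod p)`. -/
def shiftIdx (p : ℕ) (i : ℤ) (t : ℕ) : ℕ :=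
  p * (t / p) + ((((t % p : ℕ) : ℤ) + i) % (p : ℤ)).toNat

/-- `shift p i la` is `λ[i]`, cyclically shifting the `p` components within each block
of `p` consecutive components by `i`. -/
def shift (p : ℕ) (i : ℤ) (la : ℕ → ℕ → ℕ) : ℕ → ℕ → ℕ :=
  fun t => la (shiftIdx p i t)

/-- `𝔨_λ`: the minimal positive integer `m` with `λ[m] = λ`. -/
def kOf (p : ℕ) (la : ℕ → ℕ → ℕ) : ℕ :=
  sInf {m : ℕ | 0 < m ∧ shift p (m : ℤ) la = la}

open Classical in
/-- The residue of the (0-based) cell in row `i`, column `j` of the `(k+1)`-st component,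
with respect to the parameters `q` and `Q_0, …, Q_{r-1}`; it takes values in
`ℂ ⊔ (ℤ × ℂ)`. -/
def res (q : ℂ) (Q : ℕ → ℂ) (r : ℕ) (i j k : ℕ) : ℂ ⊕ (ℤ × ℂ) :=
  if q ≠ 1 ∧ Q k ≠ 0 then Sum.inl (q ^ ((j : ℤ) - (i : ℤ)) * Q k)
  else if q = 1 ∧ (∀ l < r, l ≠ k → Q l ≠ Q k) then Sum.inr ((j : ℤ) - (i : ℤ), Q k)
  else Sum.inl (Q k)

/-- The number of cells of the diagram of `λ` whose residue is `a`.  A cell is a triple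
`(k, i, j)` with `k < r`, `i < n` and `j < λ^{(k+1)}_{i+1}` (all 0-based). -/
def resCount (q : ℂ) (Q : ℕ → ℂ) (r n : ℕ) (la : ℕ → ℕ → ℕ) (a : ℂ ⊕ (ℤ × ℂ)) : ℕ :=
  Nat.card {c : ℕ × ℕ × ℕ // c.1 < r ∧ c.2.1 < n ∧ c.2.2 < la c.1 c.2.1 ∧
    res q Q r c.2.1 c.2.2 c.1 = a}

/-- The residue equivalence `λ ∼_R μ`: for every residue value the numbers of cells of
`λ` and of `μ` with that residue agree. -/
def ResEquiv (q : ℂ) (Q : ℕ → ℂ) (r n : ℕ) (la mu : ℕ → ℕ → ℕ) : Prop :=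
  ∀ a : ℂ ⊕ (ℤ × ℂ), resCount q Q r n la a = resCount q Q r n mu a

end

/-!
Let `k = 𝔨_μ`. Since `𝔨_λ ∣ k`, both `λ` and `μ` are invariant under the index map
`σ = shiftIdx p k`, which has no fixed point when `0 < k < p`. Then `σ i ≠ j`, for otherwise
`λ^{(i)} = λ^{(j)}` and `μ^{(i)} = μ^{(j)}`; so `λ` and `μ` agree at `σ i`, and by invariance at
`i`. Likewise at `j`, hence `k < p` would force `λ = μ`.
-/

section Shift

variable {p : ℕ}

lemma toNat_emod_lt (hp : 0 < p) (z : ℤ) : (z % p).toNat < p := by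
  have := Int.emod_lt_of_pos z (Int.natCast_pos.2 hp)
  omega

lemma shiftIdx_div (hp : 0 < p) (i : ℤ) (t : ℕ) : shiftIdx p i t / p = t / p := by
  rw [shiftIdx, Nat.mul_add_div hp, Nat.div_eq_of_lt (toNat_emod_lt hp _), add_zero]

lemma natCast_shiftIdx_mod (hp : 0 < p) (i : ℤ) (t : ℕ) :
    ((shiftIdx p i t % p : ℕ) : ℤ) = (((t % p : ℕ) : ℤ) + i) % p := by
  rw [shiftIdx, Nat.mul_add_mod, Nat.mod_eq_of_lt (toNat_emod_lt hp _),
    Int.toNat_of_nonneg (Int.emod_nonneg _ (Int.natCast_ne_zero.2 hp.ne'))]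

lemma shiftIdx_shiftIdx (hp : 0 < p) (a b : ℤ) (t : ℕ) :
    shiftIdx p b (shiftIdx p a t) = shiftIdx p (a + b) t := by
  refine (Nat.ext_div_mod_iff p _ _).2 ⟨by simp only [shiftIdx_div hp], Int.natCast_inj.1 ?_⟩
  rw [natCast_shiftIdx_mod hp, natCast_shiftIdx_mod hp, natCast_shiftIdx_mod hp,
    Int.emod_add_emod, add_assoc]

lemma shiftIdx_eq_self_iff (hp : 0 < p) (i : ℤ) (t : ℕ) : shiftIdx p i t = t ↔ (p : ℤ) ∣ i := by
  set x : ℤ := ((t % p : ℕ) : ℤ)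
  have hx : x % p = x :=
    Int.emod_eq_of_lt (Int.natCast_nonneg _) (Int.ofNat_lt.2 (Nat.mod_lt t hp))
  have hmod : (x + i) % p = x ↔ x + i ≡ x [ZMOD p] := by rw [Int.ModEq, hx]
  rw [Nat.ext_div_mod_iff p, shiftIdx_div hp, ← Int.natCast_inj (m := shiftIdx p i t % p),
    natCast_shiftIdx_mod hp, and_iff_right rfl, hmod, Int.modEq_comm, Int.modEq_iff_dvd,
    add_sub_cancel_left]

lemma shift_shift (hp : 0 < p) (a b : ℤ) (la : ℕ → ℕ → ℕ) :
    shift p b (shift p a la) = shift p (b + a) la := by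
  funext t
  exact congrArg la (shiftIdx_shiftIdx hp b a t)

lemma shift_eq_self_of_dvd (hp : 0 < p) {i : ℤ} (h : (p : ℤ) ∣ i) (la : ℕ → ℕ → ℕ) :
    shift p i la = la := by
  funext t
  exact congrArg la ((shiftIdx_eq_self_iff hp i t).2 h)

lemma shift_mul_eq_self (hp : 0 < p) {k : ℤ} {la : ℕ → ℕ → ℕ} (h : shift p k la = la) (m : ℕ) :
    shift p (m * k) la = la := by
  induction m with
  | zero => simpa using shift_eq_self_of_dvd hp (dvd_zero _) la
  | succ m ih => rw [Nat.cast_succ, add_one_mul, ← shift_shift hp, h, ih]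

end Shift

section KOf

variable {p : ℕ}

lemma mem_setOf_shift_eq_self (hp : 0 < p) (la : ℕ → ℕ → ℕ) :
    p ∈ {m : ℕ | 0 < m ∧ shift p (m : ℤ) la = la} :=
  ⟨hp, shift_eq_self_of_dvd hp dvd_rfl la⟩

lemma kOf_pos_and_shift_kOf (hp : 0 < p) (la : ℕ → ℕ → ℕ) :
    0 < kOf p la ∧ shift p (kOf p la) la = la :=
  Nat.sInf_mem ⟨p, mem_setOf_shift_eq_self hp la⟩

lemma kOf_le (hp : 0 < p) (la : ℕ → ℕ → ℕ) : kOf p la ≤ p :=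
  Nat.sInf_le (mem_setOf_shift_eq_self hp la)

lemma shift_eq_self_of_kOf_dvd (hp : 0 < p) {la : ℕ → ℕ → ℕ} {m : ℕ} (h : kOf p la ∣ m) :
    shift p m la = la := by
  obtain ⟨c, rfl⟩ := h
  rw [mul_comm, Nat.cast_mul]
  exact shift_mul_eq_self hp (kOf_pos_and_shift_kOf hp la).2 c

end KOf

section Invariant

variable {ι α : Type*} {f g : ι → α} {σ : ι → ι} {i j : ι}

lemma apply_eq_of_invariant_of_eq_off_pair (hσ : ∀ t, σ t ≠ t) (hf : ∀ t, f (σ t) = f t)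
    (hg : ∀ t, g (σ t) = g t) (heq : ∀ l, l ≠ i → l ≠ j → f l = g l)
    (hcond : i ≠ j → f i = f j → g i ≠ g j) : f i = g i := by
  have hij : σ i ≠ j := fun hij =>
    hcond (hij ▸ (hσ i).symm) (by rw [← hf i, hij]) (by rw [← hg i, hij])
  rw [← hf, heq _ (hσ i) hij, hg]

lemma eq_of_invariant_of_eq_off_pair (hσ : ∀ t, σ t ≠ t) (hf : ∀ t, f (σ t) = f t)
    (hg : ∀ t, g (σ t) = g t) (heq : ∀ l, l ≠ i → l ≠ j → f l = g l)
    (hcond : i ≠ j → f i = f j → g i ≠ g j) : f = g := by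
  funext l
  by_cases hli : l = i
  · exact hli ▸ apply_eq_of_invariant_of_eq_off_pair hσ hf hg heq hcond
  by_cases hlj : l = j
  · exact hlj ▸ apply_eq_of_invariant_of_eq_off_pair hσ hf hg (fun l hj hi => heq l hi hj)
      (fun hji hfji hgji => hcond hji.symm hfji.symm hgji.symm)
  exact heq l hli hlj

end Invariant

theorem kOf_eq_p_of_dvd_general
    (p : ℕ) (hp : 0 < p)
    (la mu : ℕ → ℕ → ℕ)
    (hne : la ≠ mu)
    (i j : ℕ)
    (heq : ∀ l, l ≠ i → l ≠ j → la l = mu l)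
    (hcond : i ≠ j → la i = la j → mu i ≠ mu j)
    (hdvd : kOf p la ∣ kOf p mu) :
    kOf p mu = p := by
  obtain ⟨hk_pos, hmu⟩ := kOf_pos_and_shift_kOf hp mu
  refine (kOf_le hp mu).eq_or_lt.resolve_right fun hk_lt => hne ?_
  have hla : shift p (kOf p mu) la = la := shift_eq_self_of_kOf_dvd hp hdvd
  have hσ : ∀ t, shiftIdx p (kOf p mu) t ≠ t := fun t => by
    rw [Ne, shiftIdx_eq_self_iff hp, Int.natCast_dvd_natCast]
    exact Nat.not_dvd_of_pos_of_lt hk_pos hk_lt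
  exact eq_of_invariant_of_eq_off_pair hσ (congrFun hla) (congrFun hmu) heq hcond

/-- let `λ ≠ μ` be `r`-multipartitions of `n` (`r = p·d`) which differ in
at most two components `i, j`, such that moreover `μ^{(i)} ≠ μ^{(j)}` whenever `i ≠ j`
and `λ^{(i)} = λ^{(j)}`.  If `𝔨_λ ∣ 𝔨_μ` then `𝔨_μ = p`. -/
theorem kOf_eq_p_of_dvd
    (n r p d : ℕ) (hp : 0 < p) (hd : 0 < d) (hr : r = p * d)
    (la mu : ℕ → ℕ → ℕ)
    (hla : IsMultipartition n r la) (hmu : IsMultipartition n r mu)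
    (hne : la ≠ mu)
    (i j : ℕ) (hi : i < r) (hj : j < r)
    (heq : ∀ l, l ≠ i → l ≠ j → la l = mu l)
    (hcond : i ≠ j → la i = la j → mu i ≠ mu j)
    (hdvd : kOf p la ∣ kOf p mu) :
    kOf p mu = p :=
  kOf_eq_p_of_dvd_general p hp la mu hne i j heq hcond hdvd
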